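/- Let n ≥ 1, let B ⊆ Fin n, let a : Fin n → Fin n → ℝ be a measurement matrix, and let g : Fin n → ℝ be nonzero with g_i = 0 for all i ∉ B and ∑_i g_i = 0. If v minimizes I over M_g := { u : ∑_i g_i·u_i = 1 }, then there exists λ ≥ 0 with λ = I(v) such that v is a voltage potential for the Neumann data (λ·g, a); that is, there exists J : Fin n → Fin n → ℝ with J_{ij} = −J_{ji} for all i,j, J_{ij}·(v_i − v_j) ≥ 0 for all i,j, |J_{ij}| = a_{ij} for all i,j with v_i ≠ v_j, ∑_j J_{ij} = λ·g_i for all i ∈ B, and ∑_j J_{ij} = 0 for all i ∉ B. (Every minimizer of the Neumann least gradient problem is a voltage potential for rescaled boundary current.) -/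
import Mathlib

/-- Weighted ℓ¹ energy `I(u) = (1/2) ∑_{i,j} a_{ij} |u_i - u_j|`. -/
noncomputable def lgEnergy {n : ℕ} (a : Fin n → Fin n → ℝ) (u : Fin n → ℝ) : ℝ :=
  (1 / 2) * ∑ i, ∑ j, a i j * |u i - u j|

private lemma abs_add_of_small {x η : ℝ} (hx : x ≠ 0) (h : |η| ≤ |x|) :
    |x + η| = |x| + η * Real.sign x := by
  rcases hx.lt_or_gt with hneg | hpos
  · rw [Real.sign_of_neg hneg]
    rw [abs_of_neg hneg] at h
    have h1 := (abs_le.1 h).2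
    rw [abs_of_nonpos (by linarith), abs_of_neg hneg]; ring
  · rw [Real.sign_of_pos hpos]
    rw [abs_of_pos hpos] at h
    have h1 := (abs_le.1 h).1
    rw [abs_of_nonneg (by linarith), abs_of_pos hpos]; ring

private lemma lgEnergy_smul {n : ℕ} (a : Fin n → Fin n → ℝ) (u : Fin n → ℝ) (c : ℝ) :
    lgEnergy a (fun i => c * u i) = |c| * lgEnergy a u := by
  unfold lgEnergy
  have h : ∀ i j : Fin n, a i j * |c * u i - c * u j| = |c| * (a i j * |u i - u j|) := by
    intro i j; rw [← mul_sub, abs_mul]; ring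
  simp_rw [h, ← Finset.mul_sum]
  ring

/-- Every minimizer of the Neumann least gradient problem is a voltage potential
for the rescaled boundary current `λ·g` with `λ = I(v) ≥ 0`. -/
theorem neumann_minimizer_is_voltage_potential
    (n : ℕ) (hn : 1 ≤ n) (B : Finset (Fin n))
    (a : Fin n → Fin n → ℝ)
    (hasymm : ∀ i j, a i j = a j i) (hanonneg : ∀ i j, 0 ≤ a i j)
    (hadiag : ∀ i, a i i = 0)
    (g : Fin n → ℝ) (hgne : g ≠ 0) (hgB : ∀ i, i ∉ B → g i = 0)
    (hgsum : ∑ i, g i = 0)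
    (v : Fin n → ℝ) (hvM : ∑ i, g i * v i = 1)
    (hvmin : ∀ u : Fin n → ℝ, ∑ i, g i * u i = 1 → lgEnergy a v ≤ lgEnergy a u) :
    ∃ lam : ℝ, 0 ≤ lam ∧ lam = lgEnergy a v ∧
      ∃ J : Fin n → Fin n → ℝ,
        (∀ i j, J i j = -J j i) ∧
        (∀ i j, 0 ≤ J i j * (v i - v j)) ∧
        (∀ i j, v i ≠ v j → |J i j| = a i j) ∧
        (∀ i ∈ B, ∑ j, J i j = lam * g i) ∧
        (∀ i, i ∉ B → ∑ j, J i j = 0) := by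
  classical
  set lam := lgEnergy a v with hlam
  have hlam' : lam = (1 / 2) * ∑ i, ∑ j, a i j * |v i - v j| := rfl
  have hlamnn : 0 ≤ lam := by
    rw [hlam']
    apply mul_nonneg (by norm_num)
    exact Finset.sum_nonneg fun i _ => Finset.sum_nonneg fun j _ =>
      mul_nonneg (hanonneg i j) (abs_nonneg _)
  -- Key balance condition on each level set of v
  have key : ∀ t : ℝ,
      lam * (∑ i ∈ Finset.univ.filter (fun i => v i = t), g i)
        = ∑ i ∈ Finset.univ.filter (fun i => v i = t),
            ∑ j, a i j * Real.sign (v i - v j) := by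
    intro t
    set G := ∑ i ∈ Finset.univ.filter (fun i => v i = t), g i with hG
    set D := ∑ i ∈ Finset.univ.filter (fun i => v i = t),
        ∑ j, a i j * Real.sign (v i - v j) with hD
    set ind : Fin n → ℝ := fun i => if v i = t then 1 else 0 with hind
    -- choose a small ε
    obtain ⟨ε, hεpos, hεsmall, hεG⟩ :
        ∃ ε : ℝ, 0 < ε ∧ (∀ i j, v i ≠ v j → ε ≤ |v i - v j|) ∧ ε * |G| < 1 := by
      set P : Finset ℝ := insert (1 / (|G| + 1))
        (((Finset.univ ×ˢ Finset.univ).filter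
          (fun p : Fin n × Fin n => v p.1 ≠ v p.2)).image
          (fun p => |v p.1 - v p.2|)) with hP
      have hPne : P.Nonempty := ⟨_, Finset.mem_insert_self _ _⟩
      have hGpos : 0 < |G| + 1 := by positivity
      refine ⟨P.min' hPne, ?_, ?_, ?_⟩
      · apply (Finset.lt_min'_iff P hPne).2
        intro y hy
        rcases Finset.mem_insert.1 hy with h | h
        · rw [h]; positivity
        · obtain ⟨p, hp, rfl⟩ := Finset.mem_image.1 h
          have := (Finset.mem_filter.1 hp).2
          exact abs_pos.2 (sub_ne_zero.2 this)
      · intro i j hij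
        apply Finset.min'_le
        apply Finset.mem_insert_of_mem
        exact Finset.mem_image.2 ⟨(i, j), Finset.mem_filter.2 ⟨by simp, hij⟩, rfl⟩
      · have h1 : P.min' hPne ≤ 1 / (|G| + 1) :=
          Finset.min'_le _ _ (Finset.mem_insert_self _ _)
        have h2 : P.min' hPne * |G| ≤ (1 / (|G| + 1)) * |G| :=
          mul_le_mul_of_nonneg_right h1 (abs_nonneg _)
        have h3 : (1 / (|G| + 1)) * |G| < 1 := by
          rw [div_mul_eq_mul_div, one_mul, div_lt_one hGpos]; linarith
        linarith
    -- expansion of the energy of the perturbed function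
    have expand : ∀ η : ℝ, |η| ≤ ε →
        lgEnergy a (fun i => v i + η * ind i) = lam + η * D := by
      intro η hη
      have term : ∀ i j : Fin n,
          a i j * |(v i + η * ind i) - (v j + η * ind j)|
            = a i j * |v i - v j| + η * (ind i * (a i j * Real.sign (v i - v j)))
              + η * (ind j * (a i j * Real.sign (v j - v i))) := by
        intro i j
        by_cases hi : v i = t <;> by_cases hj : v j = t
        · have hvij : v i = v j := hi.trans hj.symm
          simp [hind, hi, hj, hvij, Real.sign_zero]
        · have hne : v i ≠ v j := fun h => hj (h.symm.trans hi)
          have hx : v i - v j ≠ 0 := sub_ne_zero.2 hne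
          have habs : |(v i + η * ind i) - (v j + η * ind j)|
              = |v i - v j| + η * Real.sign (v i - v j) := by
            simp only [hind, if_pos hi, if_neg hj, mul_one, mul_zero, add_zero]
            have : v i + η - v j = (v i - v j) + η := by ring
            rw [this, abs_add_of_small hx (hη.trans (hεsmall i j hne))]
          rw [habs]
          simp only [hind, if_pos hi, if_neg hj]
          ring
        · have hne : v i ≠ v j := fun h => hi (h.trans hj)
          have hx : v i - v j ≠ 0 := sub_ne_zero.2 hne
          have habs : |(v i + η * ind i) - (v j + η * ind j)|
              = |v i - v j| + (-η) * Real.sign (v i - v j) := by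
            simp only [hind, if_neg hi, if_pos hj, mul_one, mul_zero, add_zero]
            have : v i - (v j + η) = (v i - v j) + (-η) := by ring
            rw [this, abs_add_of_small hx (by rw [abs_neg]; exact hη.trans (hεsmall i j hne))]
          rw [habs]
          have hsgn : Real.sign (v j - v i) = - Real.sign (v i - v j) := by
            rw [← neg_sub, Real.sign_neg]
          rw [hsgn]
          simp only [hind, if_neg hi, if_pos hj]
          ring
        · simp only [hind, if_neg hi, if_neg hj, mul_zero, add_zero, zero_mul]
      have hB : ∑ i, ∑ j, η * (ind i * (a i j * Real.sign (v i - v j))) = η * D := by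
        rw [hD, Finset.mul_sum, Finset.sum_filter]
        apply Finset.sum_congr rfl
        intro i _
        by_cases hi : v i = t <;> simp [hind, hi, Finset.mul_sum]
      have hC : ∑ i, ∑ j, η * (ind j * (a i j * Real.sign (v j - v i))) = η * D := by
        rw [Finset.sum_comm]
        have : ∀ j i : Fin n, η * (ind j * (a i j * Real.sign (v j - v i)))
            = η * (ind j * (a j i * Real.sign (v j - v i))) := by
          intro j i; rw [hasymm i j]
        simp_rw [this]
        exact hB
      calc lgEnergy a (fun i => v i + η * ind i)
          = (1/2) * ∑ i, ∑ j, (a i j * |v i - v j|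
              + η * (ind i * (a i j * Real.sign (v i - v j)))
              + η * (ind j * (a i j * Real.sign (v j - v i)))) := by
            unfold lgEnergy
            congr 1
            exact Finset.sum_congr rfl fun i _ => Finset.sum_congr rfl fun j _ => term i j
        _ = (1/2) * ((∑ i, ∑ j, a i j * |v i - v j|)
              + (∑ i, ∑ j, η * (ind i * (a i j * Real.sign (v i - v j))))
              + (∑ i, ∑ j, η * (ind j * (a i j * Real.sign (v j - v i))))) := by
            rw [← Finset.sum_add_distrib, ← Finset.sum_add_distrib]
            exact congrArg _ (Finset.sum_congr rfl fun i _ => by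
              rw [← Finset.sum_add_distrib, ← Finset.sum_add_distrib])
        _ = lam + η * D := by rw [hB, hC, hlam']; ring
    -- apply minimality
    have ineq : ∀ η : ℝ, |η| ≤ ε → lam * (1 + η * G) ≤ lam + η * D := by
      intro η hη
      have habsηG : |η * G| < 1 := by
        rw [abs_mul]
        calc |η| * |G| ≤ ε * |G| := mul_le_mul_of_nonneg_right hη (abs_nonneg _)
          _ < 1 := hεG
      have hden : 0 < 1 + η * G := by
        have := (abs_lt.1 habsηG).1
        linarith
      have hgsum' : ∑ i, g i * (v i + η * ind i) = 1 + η * G := by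
        have h1 : ∀ i, g i * (v i + η * ind i)
            = g i * v i + η * (if v i = t then g i else 0) := by
          intro i; by_cases hi : v i = t <;> simp [hind, hi] <;> ring
        simp_rw [h1]
        rw [Finset.sum_add_distrib, hvM, ← Finset.mul_sum, ← Finset.sum_filter, ← hG]
      have hu : ∑ i, g i * ((1 + η * G)⁻¹ * (v i + η * ind i)) = 1 := by
        have : ∀ i, g i * ((1 + η * G)⁻¹ * (v i + η * ind i))
            = (1 + η * G)⁻¹ * (g i * (v i + η * ind i)) := fun i => by ring
        simp_rw [this, ← Finset.mul_sum, hgsum']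
        field_simp
      have hmin := hvmin _ hu
      rw [lgEnergy_smul a (fun i => v i + η * ind i) (1 + η * G)⁻¹,
        abs_of_pos (inv_pos.2 hden), expand η hη] at hmin
      calc lam * (1 + η * G) ≤ ((1 + η * G)⁻¹ * (lam + η * D)) * (1 + η * G) :=
            mul_le_mul_of_nonneg_right hmin hden.le
        _ = lam + η * D := by field_simp
    have h1 := ineq ε (le_of_eq (abs_of_pos hεpos))
    have h2 := ineq (-ε) (le_of_eq (by rw [abs_neg, abs_of_pos hεpos]))
    nlinarith [h1, h2, hεpos]
  -- construct the current
  set R : Fin n → ℝ := fun i => lam * g i - ∑ j, a i j * Real.sign (v i - v j) with hR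
  set C : Fin n → ℝ := fun i => ((Finset.univ.filter (fun k => v k = v i)).card : ℝ) with hC
  have hRsum : ∀ i, ∑ j ∈ Finset.univ.filter (fun k => v k = v i), R j = 0 := by
    intro i
    simp only [hR]
    rw [Finset.sum_sub_distrib, ← Finset.mul_sum, key (v i), sub_self]
  have hCpos : ∀ i, 0 < C i := by
    intro i
    simp only [hC]
    have : i ∈ Finset.univ.filter (fun k => v k = v i) := by simp
    exact_mod_cast Finset.card_pos.2 ⟨i, this⟩
  have hCeq : ∀ i j, v i = v j → C i = C j := by
    intro i j h
    simp only [hC]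
    rw [h]
  refine ⟨lam, hlamnn, hlam, fun i j =>
    a i j * Real.sign (v i - v j) + (if v i = v j then (R i - R j) / C i else 0),
    ?_, ?_, ?_, ?_, ?_⟩
  · intro i j
    dsimp only
    have hsgn : Real.sign (v i - v j) = - Real.sign (v j - v i) := by
      rw [← neg_sub, Real.sign_neg]
    by_cases h : v i = v j
    · rw [if_pos h, if_pos h.symm, hasymm i j, hsgn, hCeq i j h]
      ring
    · rw [if_neg h, if_neg (fun h' => h h'.symm), hasymm i j, hsgn]
      ring
  · intro i j
    dsimp only
    by_cases h : v i = v j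
    · simp [h]
    · rw [if_neg h, add_zero, mul_assoc]
      exact mul_nonneg (hanonneg i j) (Real.sign_mul_nonneg _)
  · intro i j h
    dsimp only
    rw [if_neg h, add_zero, abs_mul, abs_of_nonneg (hanonneg i j)]
    have hx : v i - v j ≠ 0 := sub_ne_zero.2 h
    rcases hx.lt_or_gt with hneg | hpos
    · rw [Real.sign_of_neg hneg]; norm_num
    · rw [Real.sign_of_pos hpos]; norm_num
  · intro i _
    dsimp only
    have hdiv : ∑ j, (a i j * Real.sign (v i - v j)
        + (if v i = v j then (R i - R j) / C i else 0)) = lam * g i := by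
      rw [Finset.sum_add_distrib]
      have hsum2 : ∑ j, (if v i = v j then (R i - R j) / C i else 0) = R i := by
        have h1 : ∀ j, (if v i = v j then (R i - R j) / C i else 0)
            = (if v j = v i then (R i - R j) / C i else 0) := by
          intro j; simp only [eq_comm]
        simp_rw [h1]
        rw [← Finset.sum_filter, ← Finset.sum_div, Finset.sum_sub_distrib,
          hRsum i, Finset.sum_const, nsmul_eq_mul, sub_zero]
        have hcne : C i ≠ 0 := ne_of_gt (hCpos i)
        simp only [hC] at hcne ⊢
        field_simp
      rw [hsum2]
      simp only [hR]
      ring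
    exact hdiv
  · intro i hi
    dsimp only
    have hdiv : ∑ j, (a i j * Real.sign (v i - v j)
        + (if v i = v j then (R i - R j) / C i else 0)) = lam * g i := by
      rw [Finset.sum_add_distrib]
      have hsum2 : ∑ j, (if v i = v j then (R i - R j) / C i else 0) = R i := by
        have h1 : ∀ j, (if v i = v j then (R i - R j) / C i else 0)
            = (if v j = v i then (R i - R j) / C i else 0) := by
          intro j; simp only [eq_comm]
        simp_rw [h1]
        rw [← Finset.sum_filter, ← Finset.sum_div, Finset.sum_sub_distrib,
          hRsum i, Finset.sum_const, nsmul_eq_mul, sub_zero]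
        have hcne : C i ≠ 0 := ne_of_gt (hCpos i)
        simp only [hC] at hcne ⊢
        field_simp
      rw [hsum2]
      simp only [hR]
      ring
    rw [hdiv, hgB i hi, mul_zero]
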